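/- arXiv:2503.13219 — 3 statements merged into one kernel-verified Lean document; each statement's English description precedes it below -/
import Mathlib

section
/- Let n ≥ 2, let ν ∈ ℝⁿ with |ν| = 1, c ∈ ℝ, and let H = {x ∈ ℝⁿ : ⟨x, ν⟩ = c} be an affine hyperplane. For every L₀ > 0 and E₀ > 0 there exists ζ > 0 such that every twice continuously differentiable immersion γ: [-1,1] → ℝⁿ with L(γ) = L₀, E(γ) ≤ E₀, γ(−1), γ(1) ∈ H, and unit tangents ∂_sγ(±1) parallel to ν satisfies L₀ − |γ(1) − γ(−1)| ≥ ζ. -/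
/-!
Near the endpoint `x = 1` the unit tangent cannot turn much: on the final arc of length
`ℓ = min L₀ (4 E₀)⁻¹`, Young's inequality `|κ| ≤ |κ|² / (4 E₀) + E₀` gives
`∫ |κ| ds ≤ 1/4 + E₀ ℓ ≤ 1/2`, so the tangent stays within `1/2` of `∂ₛγ(1) = ±ν` and its
component orthogonal to `ν` has length at most `√3/2 < 7/8`.
The chord `γ 1 - γ (-1)` is orthogonal to `ν`, so it is the integral of the orthogonal
projection `P γ'` onto `ν⊥`; since `|P γ'| ≤ |γ'|` everywhere and `|P γ'| ≤ 7/8 |γ'|` on the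
final arc, the chord is shorter than `L₀` by at least `ℓ / 8`.
-/

open Set MeasureTheory Filter
open scoped RealInnerProductSpace

noncomputable section

variable {n : ℕ}

/-- Arc-length derivative along the curve `g` of a field `f`. -/
def aderiv {F : Type*} [NormedAddCommGroup F] [NormedSpace ℝ F]
    (g : ℝ → EuclideanSpace ℝ (Fin n)) (f : ℝ → F) : ℝ → F :=
  fun x => ‖deriv g x‖⁻¹ • deriv f x

/-- Unit tangent `∂ₛγ`. -/
def utang (g : ℝ → EuclideanSpace ℝ (Fin n)) : ℝ → EuclideanSpace ℝ (Fin n) :=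
  aderiv g g

/-- Normal projection along `g`. -/
def nperp (g f : ℝ → EuclideanSpace ℝ (Fin n)) : ℝ → EuclideanSpace ℝ (Fin n) :=
  fun x => f x - ⟪f x, utang g x⟫ • utang g x

/-- Curvature vector `κ = ∂ₛ²γ`. -/
def curvV (g : ℝ → EuclideanSpace ℝ (Fin n)) : ℝ → EuclideanSpace ℝ (Fin n) :=
  aderiv g (utang g)

/-- Projected arc-length derivative `∂ₛ^⊥`. -/
def aderivP (g f : ℝ → EuclideanSpace ℝ (Fin n)) : ℝ → EuclideanSpace ℝ (Fin n) :=
  nperp g (aderiv g f)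

/-- Iterated projected arc-length derivative `(∂ₛ^⊥)^k`. -/
def aderivPIter (g : ℝ → EuclideanSpace ℝ (Fin n)) :
    ℕ → (ℝ → EuclideanSpace ℝ (Fin n)) → ℝ → EuclideanSpace ℝ (Fin n)
  | 0, f => f
  | k + 1, f => aderivP g (aderivPIter g k f)

/-- Iterated full arc-length derivative `∂ₛ^k`. -/
def aderivIter (g : ℝ → EuclideanSpace ℝ (Fin n)) :
    ℕ → (ℝ → EuclideanSpace ℝ (Fin n)) → ℝ → EuclideanSpace ℝ (Fin n)
  | 0, f => f
  | k + 1, f => aderiv g (aderivIter g k f)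

/-- Elastic energy `E(γ) = ∫ |κ|² ds`. -/
def elE (g : ℝ → EuclideanSpace ℝ (Fin n)) : ℝ :=
  ∫ x in (-1:ℝ)..1, ‖curvV g x‖ ^ 2 * ‖deriv g x‖

/-- Length `L(γ) = ∫ ds`. -/
def elL (g : ℝ → EuclideanSpace ℝ (Fin n)) : ℝ :=
  ∫ x in (-1:ℝ)..1, ‖deriv g x‖

/-- Energy gradient `∇E(γ) = 2(∂ₛ^⊥)²κ + |κ|²κ`. -/
def gradElE (g : ℝ → EuclideanSpace ℝ (Fin n)) : ℝ → EuclideanSpace ℝ (Fin n) :=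
  fun x => (2:ℝ) • aderivPIter g 2 (curvV g) x + ‖curvV g x‖ ^ 2 • curvV g x

/-- Lagrange multiplier `λ(γ)`. -/
def lagMul (g : ℝ → EuclideanSpace ℝ (Fin n)) : ℝ :=
  (∫ x in (-1:ℝ)..1, ⟪gradElE g x, curvV g x⟫ * ‖deriv g x‖) / elE g

/-- Time derivative `∂ₜγ` of a family. -/
def timeD (γ : ℝ → ℝ → EuclideanSpace ℝ (Fin n)) : ℝ → ℝ → EuclideanSpace ℝ (Fin n) :=
  fun t x => deriv (fun s => γ s x) t

/-- Tangential speed `φ = ⟨∂ₜγ, ∂ₛγ⟩`. -/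
def tanSpeed (γ : ℝ → ℝ → EuclideanSpace ℝ (Fin n)) : ℝ → ℝ → ℝ :=
  fun t x => ⟪timeD γ t x, utang (γ t) x⟫

/-- Normal velocity `V = ∂ₜγ − φ ∂ₛγ`. -/
def normalVel (γ : ℝ → ℝ → EuclideanSpace ℝ (Fin n)) : ℝ → ℝ → EuclideanSpace ℝ (Fin n) :=
  fun t x => timeD γ t x - tanSpeed γ t x • utang (γ t) x

/-- Normal time derivative `∂ₜ^⊥N` of a field along the family γ. -/
def timeDPerp (γ N : ℝ → ℝ → EuclideanSpace ℝ (Fin n)) : ℝ → ℝ → EuclideanSpace ℝ (Fin n) :=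
  fun t x => deriv (fun s => N s x) t
    - ⟪deriv (fun s => N s x) t, utang (γ t) x⟫ • utang (γ t) x

/-- Shape operator `S_p = −Dξ(p)`. -/
def shapeOp (ξ : EuclideanSpace ℝ (Fin n) → EuclideanSpace ℝ (Fin n))
    (p v : EuclideanSpace ℝ (Fin n)) : EuclideanSpace ℝ (Fin n) :=
  -(fderiv ℝ ξ p v)

/-- `L²(ds)` norm of a field along `g`. -/
def l2ds (g f : ℝ → EuclideanSpace ℝ (Fin n)) : ℝ :=
  Real.sqrt (∫ x in (-1:ℝ)..1, ‖f x‖ ^ 2 * ‖deriv g x‖)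

/-- Fixed-length free-boundary elastic flow on `[0,T)`. -/
def IsFLFBEF (T : ℝ) (ξ : EuclideanSpace ℝ (Fin n) → EuclideanSpace ℝ (Fin n))
    (τ : ℝ → ℝ) (γ : ℝ → ℝ → EuclideanSpace ℝ (Fin n)) : Prop :=
  ContDiff ℝ (⊤ : ℕ∞) (fun p : ℝ × ℝ => γ p.1 p.2) ∧
  (∀ t ∈ Ico (0:ℝ) T, ∀ x ∈ Icc (-1:ℝ) 1, deriv (γ t) x ≠ 0) ∧
  (∀ t ∈ Ico (0:ℝ) T, 0 < elE (γ t)) ∧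
  (∀ t ∈ Ico (0:ℝ) T, ∀ x ∈ Icc (-1:ℝ) 1,
    timeD γ t x = -(gradElE (γ t) x - lagMul (γ t) • curvV (γ t) x)) ∧
  (∀ t ∈ Ico (0:ℝ) T, ∀ x ∈ ({-1, 1} : Set ℝ),
    ⟪timeD γ t x, utang (γ t) x⟫ = 0 ∧
    utang (γ t) x = τ x • ξ (γ t x) ∧
    ‖ξ (γ t x)‖ = 1 ∧
    aderivP (γ t) (curvV (γ t)) x = -(τ x • shapeOp ξ (γ t x) (curvV (γ t) x)))


section InnerProductSpace

variable {E : Type*} [NormedAddCommGroup E] [InnerProductSpace ℝ E]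

lemma norm_sub_inner_smul_sq {ν : E} (hν : ‖ν‖ = 1) (v : E) :
    ‖v - ⟪ν, v⟫ • ν‖ ^ 2 = ‖v‖ ^ 2 - ⟪ν, v⟫ ^ 2 := by
  rw [norm_sub_sq_real, real_inner_smul_right, norm_smul, Real.norm_eq_abs, hν,
    real_inner_comm]
  nlinarith [sq_abs ⟪v, ν⟫]

lemma norm_sub_inner_smul_le {ν : E} (hν : ‖ν‖ = 1) (v : E) : ‖v - ⟪ν, v⟫ • ν‖ ≤ ‖v‖ := by
  have := norm_sub_inner_smul_sq hν v
  nlinarith [norm_nonneg (v - ⟪ν, v⟫ • ν), norm_nonneg v, sq_nonneg ⟪ν, v⟫]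

lemma norm_sub_inner_smul_le_of_norm_sub_le {ν u v : E} (hν : ‖ν‖ = 1) (hu : ‖u‖ = 1)
    (hv : |⟪ν, v⟫| = 1) (huv : ‖v - u‖ ≤ 1 / 2) :
    ‖u - ⟪ν, u⟫ • ν‖ ≤ 7 / 8 := by
  have hdiff : |⟪ν, v⟫ - ⟪ν, u⟫| ≤ 1 / 2 := by
    rw [← inner_sub_right]
    calc |⟪ν, v - u⟫| ≤ ‖ν‖ * ‖v - u‖ := abs_real_inner_le_norm _ _
      _ ≤ 1 / 2 := by rw [hν, one_mul]; exact huv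
  have hlow : 1 / 4 ≤ ⟪ν, u⟫ ^ 2 := by
    have : 1 / 2 ≤ |⟪ν, u⟫| := by
      linarith [abs_sub_abs_le_abs_sub ⟪ν, v⟫ ⟪ν, u⟫]
    nlinarith [sq_abs ⟪ν, u⟫]
  have hsq := norm_sub_inner_smul_sq hν u
  rw [hu] at hsq
  nlinarith [norm_nonneg (u - ⟪ν, u⟫ • ν)]

lemma intervalIntegral.integral_sub_inner_smul [CompleteSpace E] (ν : E)
    {f : ℝ → E} {a b : ℝ} (hf : IntervalIntegrable f volume a b) :
    ∫ t in a..b, (f t - ⟪ν, f t⟫ • ν) = (∫ t in a..b, f t) - ⟪ν, ∫ t in a..b, f t⟫ • ν := by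
  simpa using
    (ContinuousLinearMap.id ℝ E - (innerSL ℝ ν).smulRight ν).intervalIntegral_comp_comm hf

end InnerProductSpace

lemma le_mul_sq_add_inv {t : ℝ} (ht : 0 < t) (a : ℝ) : a ≤ t * a ^ 2 + (4 * t)⁻¹ := by
  have : t * a ^ 2 + (4 * t)⁻¹ - a = t * (a - (2 * t)⁻¹) ^ 2 := by field_simp; ring
  nlinarith [mul_nonneg ht.le (sq_nonneg (a - (2 * t)⁻¹))]

namespace intervalIntegral

variable {f w : ℝ → ℝ} {a b : ℝ}

lemma integral_mul_le_young (hab : a ≤ b) (hf : ContinuousOn f (Icc a b))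
    (hw : ContinuousOn w (Icc a b)) (hw₀ : ∀ x ∈ Icc a b, 0 ≤ w x) {t : ℝ} (ht : 0 < t) :
    ∫ x in a..b, f x * w x ≤ t * (∫ x in a..b, f x ^ 2 * w x) + (4 * t)⁻¹ * ∫ x in a..b, w x := by
  rw [← uIcc_of_le hab] at hf hw
  have hfw : IntervalIntegrable (fun x => f x ^ 2 * w x) volume a b :=
    ((hf.pow 2).mul hw).intervalIntegrable
  rw [← integral_const_mul, ← integral_const_mul, ← integral_add (hfw.const_mul _)
    (hw.intervalIntegrable.const_mul _)]
  refine integral_mono_on hab (hf.mul hw).intervalIntegrable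
    ((hfw.const_mul _).add (hw.intervalIntegrable.const_mul _)) fun x hx => ?_
  calc f x * w x ≤ (t * f x ^ 2 + (4 * t)⁻¹) * w x :=
        mul_le_mul_of_nonneg_right (le_mul_sq_add_inv ht _) (hw₀ x hx)
    _ = t * (f x ^ 2 * w x) + (4 * t)⁻¹ * w x := by ring

lemma integral_mono_interval_left {c : ℝ} (hac : a ≤ c) (hcb : c ≤ b)
    (hf : IntervalIntegrable f volume a b) (hf₀ : ∀ x ∈ Icc a b, 0 ≤ f x) :
    ∫ x in c..b, f x ≤ ∫ x in a..b, f x :=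
  integral_mono_interval hac hcb le_rfl
    ((ae_restrict_mem measurableSet_Ioc).mono fun x hx => hf₀ x (Ioc_subset_Icc_self hx)) hf

lemma exists_integral_left_eq (hab : a ≤ b) (hf : Continuous f) {ℓ : ℝ} (hℓ : 0 ≤ ℓ)
    (hℓ' : ℓ ≤ ∫ x in a..b, f x) : ∃ c ∈ Icc a b, ∫ x in c..b, f x = ℓ := by
  have hcont : Continuous fun c => ∫ x in c..b, f x := by
    refine (continuous_primitive (μ := volume) hf.intervalIntegrable b).neg.congr fun c => ?_
    rw [integral_symm b c, Pi.neg_apply]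
  exact intermediate_value_Icc' hab hcont.continuousOn ⟨by simpa using hℓ, hℓ'⟩

end intervalIntegral

section Chord

variable {E : Type*} [NormedAddCommGroup E] [InnerProductSpace ℝ E] [CompleteSpace E]
  {f : ℝ → E} {ν : E} {a b c θ : ℝ}

lemma norm_sub_le_integral_norm_sub_inner_smul (hf : ContDiff ℝ 1 f) (hab : a ≤ b)
    (hfν : ⟪ν, f b - f a⟫ = 0) :
    ‖f b - f a‖ ≤ ∫ x in a..b, ‖deriv f x - ⟪ν, deriv f x⟫ • ν‖ := by
  have hf' : IntervalIntegrable (deriv f) volume a b :=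
    (hf.continuous_deriv le_rfl).intervalIntegrable a b
  have hFTC : ∫ x in a..b, deriv f x = f b - f a :=
    intervalIntegral.integral_deriv_eq_sub (fun x _ => hf.differentiable one_ne_zero x) hf'
  calc ‖f b - f a‖ = ‖∫ x in a..b, (deriv f x - ⟪ν, deriv f x⟫ • ν)‖ := by
        rw [intervalIntegral.integral_sub_inner_smul ν hf', hFTC, hfν, zero_smul, sub_zero]
    _ ≤ _ := intervalIntegral.norm_integral_le_integral_norm hab

lemma le_integral_norm_deriv_sub_norm_sub (hf : ContDiff ℝ 1 f) (hν : ‖ν‖ = 1)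
    (hac : a ≤ c) (hcb : c ≤ b) (hfν : ⟪ν, f b - f a⟫ = 0)
    (hθ : ∀ x ∈ Icc c b, ‖deriv f x - ⟪ν, deriv f x⟫ • ν‖ ≤ θ * ‖deriv f x‖) :
    (1 - θ) * ∫ x in c..b, ‖deriv f x‖ ≤ (∫ x in a..b, ‖deriv f x‖) - ‖f b - f a‖ := by
  have hcont : Continuous (deriv f) := hf.continuous_deriv le_rfl
  have hint : ∀ a b : ℝ, IntervalIntegrable (fun x => ‖deriv f x‖) volume a b :=
    hcont.norm.intervalIntegrable
  have hPint : IntervalIntegrable (fun x => ‖deriv f x - ⟪ν, deriv f x⟫ • ν‖) volume a b :=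
    (by fun_prop : Continuous fun x => ‖deriv f x - ⟪ν, deriv f x⟫ • ν‖).intervalIntegrable a b
  calc (1 - θ) * ∫ x in c..b, ‖deriv f x‖
      = ∫ x in c..b, (1 - θ) * ‖deriv f x‖ := (intervalIntegral.integral_const_mul _ _).symm
    _ ≤ ∫ x in c..b, (‖deriv f x‖ - ‖deriv f x - ⟪ν, deriv f x⟫ • ν‖) := by
        refine intervalIntegral.integral_mono_on hcb ((hint c b).const_mul _)
          ((hint c b).sub (hPint.mono_set ?_)) fun x hx => by linarith [hθ x hx]
        rw [uIcc_of_le hcb, uIcc_of_le (hac.trans hcb)]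
        exact Icc_subset_Icc_left hac
    _ ≤ ∫ x in a..b, (‖deriv f x‖ - ‖deriv f x - ⟪ν, deriv f x⟫ • ν‖) :=
        intervalIntegral.integral_mono_interval_left hac hcb ((hint a b).sub hPint)
          fun x _ => sub_nonneg.2 (norm_sub_inner_smul_le hν _)
    _ ≤ (∫ x in a..b, ‖deriv f x‖) - ‖f b - f a‖ := by
        rw [intervalIntegral.integral_sub (hint a b) hPint]
        linarith [norm_sub_le_integral_norm_sub_inner_smul hf (hac.trans hcb) hfν]

end Chord

section UnitTangent

variable {γ : ℝ → EuclideanSpace ℝ (Fin n)} {x a b : ℝ}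

lemma norm_utang (hx : deriv γ x ≠ 0) : ‖utang γ x‖ = 1 := by
  rw [utang, aderiv, norm_smul, norm_inv, norm_norm, inv_mul_cancel₀ (norm_ne_zero_iff.2 hx)]

lemma norm_deriv_smul_utang (hx : deriv γ x ≠ 0) : ‖deriv γ x‖ • utang γ x = deriv γ x := by
  rw [utang, aderiv, smul_smul, mul_inv_cancel₀ (norm_ne_zero_iff.2 hx), one_smul]

lemma contDiffAt_utang (hγ : ContDiff ℝ 2 γ) (hx : deriv γ x ≠ 0) :
    ContDiffAt ℝ 1 (utang γ) x := by
  have hγ' : ContDiff ℝ 1 (deriv γ) := hγ.iterate_deriv' 1 1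
  exact ((hγ'.contDiffAt.norm ℝ hx).inv (norm_ne_zero_iff.2 hx)).smul hγ'.contDiffAt

lemma hasDerivAt_utang (hγ : ContDiff ℝ 2 γ) (hx : deriv γ x ≠ 0) :
    HasDerivAt (utang γ) (‖deriv γ x‖ • curvV γ x) x := by
  rw [curvV, aderiv, smul_smul, mul_inv_cancel₀ (norm_ne_zero_iff.2 hx), one_smul]
  exact ((contDiffAt_utang hγ hx).differentiableAt one_ne_zero).hasDerivAt

lemma continuousOn_curvV (hγ : ContDiff ℝ 2 γ) :
    ContinuousOn (curvV γ) {x | deriv γ x ≠ 0} := by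
  have hγ' : Continuous (deriv γ) := hγ.continuous_deriv one_le_two
  have hU : IsOpen {x | deriv γ x ≠ 0} := isOpen_compl_singleton.preimage hγ'
  have hT : ContDiffOn ℝ 1 (utang γ) {x | deriv γ x ≠ 0} :=
    fun x hx => (contDiffAt_utang hγ hx).contDiffWithinAt
  exact (hγ'.norm.continuousOn.inv₀ fun x hx => norm_ne_zero_iff.2 hx).smul
    (hT.continuousOn_deriv_of_isOpen hU le_rfl)

lemma norm_utang_sub_le (hγ : ContDiff ℝ 2 γ) (hab : a ≤ b)
    (hreg : ∀ x ∈ Icc a b, deriv γ x ≠ 0) :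
    ‖utang γ b - utang γ a‖ ≤ ∫ x in a..b, ‖curvV γ x‖ * ‖deriv γ x‖ := by
  have hcont : ContinuousOn (fun x => ‖deriv γ x‖ • curvV γ x) (uIcc a b) := by
    rw [uIcc_of_le hab]
    exact (hγ.continuous_deriv one_le_two).norm.continuousOn.smul
      ((continuousOn_curvV hγ).mono hreg)
  rw [← intervalIntegral.integral_eq_sub_of_hasDerivAt
    (fun x hx => hasDerivAt_utang hγ (hreg x (by rwa [uIcc_of_le hab] at hx)))
    hcont.intervalIntegrable]
  refine (intervalIntegral.norm_integral_le_integral_norm hab).trans_eq ?_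
  simp only [norm_smul, norm_norm, mul_comm]

lemma norm_utang_sub_le_half (hγ : ContDiff ℝ 2 γ) (hab : a ≤ b)
    (hreg : ∀ x ∈ Icc a b, deriv γ x ≠ 0) {E₀ : ℝ} (hE₀ : 0 < E₀)
    (hE : ∫ x in a..b, ‖curvV γ x‖ ^ 2 * ‖deriv γ x‖ ≤ E₀)
    (hL : ∫ x in a..b, ‖deriv γ x‖ ≤ (4 * E₀)⁻¹) :
    ‖utang γ b - utang γ a‖ ≤ 1 / 2 := by
  have hγ' : ContinuousOn (fun x => ‖deriv γ x‖) (Icc a b) :=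
    (hγ.continuous_deriv one_le_two).norm.continuousOn
  have hyoung := intervalIntegral.integral_mul_le_young hab
    ((continuousOn_curvV hγ).mono hreg).norm hγ' (fun x _ => norm_nonneg _)
    (inv_pos.2 (mul_pos four_pos hE₀))
  have hinv : (4 * (4 * E₀)⁻¹)⁻¹ = E₀ := by field_simp
  rw [hinv] at hyoung
  calc ‖utang γ b - utang γ a‖ ≤ ∫ x in a..b, ‖curvV γ x‖ * ‖deriv γ x‖ :=
        norm_utang_sub_le hγ hab hreg
    _ ≤ (4 * E₀)⁻¹ * E₀ + E₀ * (4 * E₀)⁻¹ :=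
        hyoung.trans (add_le_add (mul_le_mul_of_nonneg_left hE (by positivity))
          (mul_le_mul_of_nonneg_left hL hE₀.le))
    _ = 1 / 2 := by field_simp; norm_num

lemma norm_deriv_sub_inner_smul_le (hγ : ContDiff ℝ 2 γ) (hab : a ≤ b) (hreg : ∀ x ∈ Icc a b, deriv γ x ≠ 0)
    {ν : EuclideanSpace ℝ (Fin n)} (hν : ‖ν‖ = 1) {r : ℝ} (hb : utang γ b = r • ν)
    {E₀ : ℝ} (hE₀ : 0 < E₀) (hE : ∫ x in a..b, ‖curvV γ x‖ ^ 2 * ‖deriv γ x‖ ≤ E₀)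
    (hL : ∫ x in a..b, ‖deriv γ x‖ ≤ (4 * E₀)⁻¹) :
    ‖deriv γ a - ⟪ν, deriv γ a⟫ • ν‖ ≤ 7 / 8 * ‖deriv γ a‖ := by
  have ha := hreg a ⟨le_rfl, hab⟩
  have hr : |r| = 1 := by
    have := norm_utang (hreg b ⟨hab, le_rfl⟩)
    rwa [hb, norm_smul, hν, mul_one, Real.norm_eq_abs] at this
  have hνb : |⟪ν, utang γ b⟫| = 1 := by
    rw [hb, real_inner_smul_right, real_inner_self_eq_norm_sq, hν, one_pow, mul_one, hr]
  have hT := norm_sub_inner_smul_le_of_norm_sub_le hν (norm_utang ha) hνb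
    (norm_utang_sub_le_half hγ hab hreg hE₀ hE hL)
  have hscale : deriv γ a - ⟪ν, deriv γ a⟫ • ν
      = ‖deriv γ a‖ • (utang γ a - ⟪ν, utang γ a⟫ • ν) := by
    conv_lhs => rw [← norm_deriv_smul_utang ha]
    rw [real_inner_smul_right, smul_sub, smul_smul]
  rw [hscale, norm_smul, norm_norm, mul_comm (7 / 8 : ℝ)]
  exact mul_le_mul_of_nonneg_left hT (norm_nonneg _)

lemma integral_energy_density_le_elE (hγ : ContDiff ℝ 2 γ)
    (hreg : ∀ x ∈ Icc (-1:ℝ) 1, deriv γ x ≠ 0) (ha : a ∈ Icc (-1:ℝ) 1) :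
    ∫ x in a..1, ‖curvV γ x‖ ^ 2 * ‖deriv γ x‖ ≤ elE γ := by
  have hcont : ContinuousOn (fun x => ‖curvV γ x‖ ^ 2 * ‖deriv γ x‖) (uIcc (-1) 1) := by
    rw [uIcc_of_le (by norm_num)]
    exact (((continuousOn_curvV hγ).mono hreg).norm.pow 2).mul
      (hγ.continuous_deriv one_le_two).norm.continuousOn
  exact intervalIntegral.integral_mono_interval_left ha.1 ha.2 hcont.intervalIntegrable
    fun x _ => by positivity

end UnitTangent

theorem statement16_general
    (n : ℕ)
    (ν : EuclideanSpace ℝ (Fin n)) (hν : ‖ν‖ = 1) (c : ℝ)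
    (L₀ E₀ : ℝ) (hL : 0 < L₀) (hE : 0 < E₀) :
    ∃ ζ : ℝ, 0 < ζ ∧
      ∀ γ : ℝ → EuclideanSpace ℝ (Fin n),
        ContDiff ℝ 2 γ →
        (∀ x ∈ Icc (-1:ℝ) 1, deriv γ x ≠ 0) →
        elL γ = L₀ → elE γ ≤ E₀ →
        ⟪γ (-1), ν⟫ = c → ⟪γ 1, ν⟫ = c →
        (∃ r : ℝ, utang γ (-1) = r • ν) →
        (∃ r : ℝ, utang γ 1 = r • ν) →
        ζ ≤ L₀ - ‖γ 1 - γ (-1)‖ := by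
  set ℓ := min L₀ (4 * E₀)⁻¹
  refine ⟨ℓ / 8, by positivity, ?_⟩
  rintro γ hγ hreg hLγ hEγ hleft hright - ⟨r, hr⟩
  have hγ' : Continuous (deriv γ) := hγ.continuous_deriv one_le_two
  obtain ⟨x₀, hx₀, hℓ⟩ := intervalIntegral.exists_integral_left_eq (by norm_num) hγ'.norm
    (by positivity) (hLγ ▸ min_le_left L₀ _ : ℓ ≤ elL γ)
  have hchord : ⟪ν, γ 1 - γ (-1)⟫ = 0 := by
    rw [inner_sub_right, real_inner_comm, hright, real_inner_comm, hleft, sub_self]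
  have htail : ∀ x ∈ Icc x₀ 1,
      ‖deriv γ x - ⟪ν, deriv γ x⟫ • ν‖ ≤ 7 / 8 * ‖deriv γ x‖ := fun x hx => by
    have hx' : Icc x 1 ⊆ Icc (-1) 1 := Icc_subset_Icc_left (hx₀.1.trans hx.1)
    refine norm_deriv_sub_inner_smul_le hγ hx.2 (fun y hy => hreg y (hx' hy)) hν hr hE ?_ ?_
    · exact (integral_energy_density_le_elE hγ hreg (hx' ⟨le_rfl, hx.2⟩)).trans hEγ
    · calc ∫ y in x..1, ‖deriv γ y‖ ≤ ∫ y in x₀..1, ‖deriv γ y‖ :=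
            intervalIntegral.integral_mono_interval_left hx.1 hx.2
              (hγ'.norm.intervalIntegrable _ _) fun _ _ => norm_nonneg _
        _ ≤ (4 * E₀)⁻¹ := hℓ ▸ min_le_right _ _
  have hdeficit : (1 - 7 / 8) * ℓ ≤ elL γ - ‖γ 1 - γ (-1)‖ :=
    hℓ ▸ le_integral_norm_deriv_sub_norm_sub (hγ.of_le one_le_two) hν hx₀.1 hx₀.2 hchord htail
  rw [hLγ] at hdeficit
  linarith

/-- uniform non-flatness for curves of fixed length and bounded energy
meeting a hyperplane orthogonally at both endpoints. -/
theorem statement16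
    (n : ℕ) (hn : 2 ≤ n)
    (ν : EuclideanSpace ℝ (Fin n)) (hν : ‖ν‖ = 1) (c : ℝ)
    (L₀ E₀ : ℝ) (hL : 0 < L₀) (hE : 0 < E₀) :
    ∃ ζ : ℝ, 0 < ζ ∧
      ∀ γ : ℝ → EuclideanSpace ℝ (Fin n),
        ContDiff ℝ 2 γ →
        (∀ x ∈ Icc (-1:ℝ) 1, deriv γ x ≠ 0) →
        elL γ = L₀ → elE γ ≤ E₀ →
        ⟪γ (-1), ν⟫ = c → ⟪γ 1, ν⟫ = c →
        (∃ r : ℝ, utang γ (-1) = r • ν) →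
        (∃ r : ℝ, utang γ 1 = r • ν) →
        ζ ≤ L₀ - ‖γ 1 - γ (-1)‖ :=
  statement16_general n ν hν c L₀ E₀ hL hE

end
end

section
/- Let γ = (γ¹, γ²): [-1,1] → ℝ² be a smooth immersion with γ²(±1) = 0 and ∂_xγ¹(±1) = 0, and let m ∈ ℕ. Then the reflection Rγ: S¹ → ℝ² is 2m-times continuously differentiable on S¹ (equivalently, Rγ ∈ W^{2m+1,∞}(S¹), i.e. Rγ is C^{2m} with Lipschitz continuous 2m-th derivative) if and only if ∂_x^{2k}γ²(±1) = 0 and ∂_x^{2k−1}γ¹(±1) = 0 for all 1 ≤ k ≤ m. -/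
open Set MeasureTheory Filter
open scoped RealInnerProductSpace

noncomputable section

variable {n : ℕ}

/-- Reflection of the plane across the x-axis `M = ℝ×{0}`. -/
def reflP (v : EuclideanSpace ℝ (Fin 2)) : EuclideanSpace ℝ (Fin 2) :=
  WithLp.toLp 2 (fun i => if i = 0 then v i else -(v i))

/-- The representative in `[-1, 3)` of `x` modulo `4` (identifying `S¹ = ℝ/4ℤ`). -/
def wrap4 (x : ℝ) : ℝ := 4 * Int.fract ((x + 1) / 4) - 1

/-- The reflected closed curve `Rγ : S¹ = ℝ/4ℤ → ℝ²`, realized as the 4-periodic map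
with `Rγ(x) = γ(x)` on `[-1,1]` and `Rγ(x) = Pγ(2−x)` on `[1,3]`. -/
def reflCurve (γ : ℝ → EuclideanSpace ℝ (Fin 2)) : ℝ → EuclideanSpace ℝ (Fin 2) :=
  fun x => if wrap4 x ≤ 1 then γ (wrap4 x) else reflP (γ (2 - wrap4 x))

/-!
Near each junction point `±1`, `Rγ` is the gluing of `γ` with the reflected arc
`x ↦ Pγ(±2 - x)`, whose `j`-th derivative at the junction is `(-1)ʲ P ∂ʲγ(±1)`. Two `C^N` arcs
glue to a `C^N` map exactly when their derivatives of order `≤ N` agree at the junction, and as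
`P` fixes the first coordinate and negates the second, `∂ʲγ(±1) = (-1)ʲ P ∂ʲγ(±1)` says that
`∂ʲγ²(±1) = 0` for even `j` and `∂ʲγ¹(±1) = 0` for odd `j`. The Lipschitz bound on the `2m`-th
derivative comes for free: it is periodic and on a period it consists of two smooth pieces.
-/

open Topology

section Glue

variable {E : Type*} {f g : ℝ → E} {a : ℝ}

def glue (a : ℝ) (f g : ℝ → E) : ℝ → E := fun x => if x ≤ a then f x else g x

lemma glue_eventuallyEq_left {x : ℝ} (hx : x < a) : glue a f g =ᶠ[𝓝 x] f := by
  filter_upwards [Iio_mem_nhds hx] with z (hz : z < a)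
  simp [glue, hz.le]

lemma glue_eventuallyEq_right {x : ℝ} (hx : a < x) : glue a f g =ᶠ[𝓝 x] g := by
  filter_upwards [Ioi_mem_nhds hx] with z (hz : a < z)
  simp [glue, not_le.2 hz]

variable [NormedAddCommGroup E] [NormedSpace ℝ E]

lemma hasDerivAt_glue (hf : Differentiable ℝ f) (hg : Differentiable ℝ g) (h₀ : f a = g a)
    (h₁ : deriv f a = deriv g a) (x : ℝ) :
    HasDerivAt (glue a f g) (glue a (deriv f) (deriv g) x) x := by
  rcases lt_trichotomy x a with hx | rfl | hx
  · rw [show glue a (deriv f) (deriv g) x = deriv f x from if_pos hx.le]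
    exact (hf x).hasDerivAt.congr_of_eventuallyEq (glue_eventuallyEq_left hx)
  · rw [show glue x (deriv f) (deriv g) x = deriv f x from if_pos le_rfl]
    have hl : HasDerivWithinAt (glue x f g) (deriv f x) (Iic x) x :=
      (hf x).hasDerivAt.hasDerivWithinAt.congr (fun y (hy : y ≤ x) => if_pos hy) (if_pos le_rfl)
    have hr : HasDerivWithinAt (glue x f g) (deriv f x) (Ici x) x := by
      refine h₁ ▸ (hg x).hasDerivAt.hasDerivWithinAt.congr (fun y (hy : x ≤ y) => ?_)
        (by simp [glue, h₀])
      rcases hy.eq_or_lt with rfl | hy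
      · simp [glue, h₀]
      · simp [glue, not_le.2 hy]
    simpa [Iic_union_Ici] using hl.union hr
  · rw [show glue a (deriv f) (deriv g) x = deriv g x from if_neg (not_le.2 hx)]
    exact (hg x).hasDerivAt.congr_of_eventuallyEq (glue_eventuallyEq_right hx)

theorem contDiff_glue {N : ℕ} (hf : ContDiff ℝ N f) (hg : ContDiff ℝ N g)
    (h : ∀ j ≤ N, iteratedDeriv j f a = iteratedDeriv j g a) : ContDiff ℝ N (glue a f g) := by
  induction N generalizing f g with
  | zero =>
    have h₀ : f a = g a := by simpa using h 0 le_rfl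
    exact contDiff_zero.2 <| hf.continuous.if_le hg.continuous continuous_id continuous_const
      fun x hx => hx ▸ h₀
  | succ N ih =>
    rw [Nat.cast_succ, contDiff_succ_iff_deriv] at hf hg ⊢
    have h₀ : f a = g a := by simpa using h 0 (by omega)
    have h₁ : deriv f a = deriv g a := by simpa using h 1 (by omega)
    have hderiv := hasDerivAt_glue hf.1 hg.1 h₀ h₁
    refine ⟨fun x => (hderiv x).differentiableAt, by simp, ?_⟩
    rw [funext fun x => (hderiv x).deriv]
    exact ih hf.2.2 hg.2.2 fun j hj => by
      simpa only [iteratedDeriv_succ'] using h (j + 1) (by omega)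

end Glue

section IteratedDeriv

variable {E F : Type*} [NormedAddCommGroup E] [NormedSpace ℝ E]
  [NormedAddCommGroup F] [NormedSpace ℝ F]

theorem Set.EqOn.iteratedDeriv_Icc {f g : ℝ → E} {a b : ℝ} {N j : ℕ} (hab : a < b)
    (hf : ContDiff ℝ N f) (hg : ContDiff ℝ N g) (hj : j ≤ N) (h : EqOn f g (Ioo a b)) :
    EqOn (iteratedDeriv j f) (iteratedDeriv j g) (Icc a b) := by
  have := (h.iteratedDeriv_of_isOpen isOpen_Ioo j).closure
    (hf.continuous_iteratedDeriv j (mod_cast hj)) (hg.continuous_iteratedDeriv j (mod_cast hj))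
  rwa [closure_Ioo hab.ne] at this

theorem iteratedDeriv_eq_of_eqOn_Ioo_of_eqOn_Ioo {f g h : ℝ → E} {a b c : ℝ} {N j : ℕ}
    (hab : a < b) (hbc : b < c) (hf : ContDiff ℝ N f) (hg : ContDiff ℝ N g)
    (hh : ContDiff ℝ N h) (hj : j ≤ N) (hhf : EqOn h f (Ioo a b)) (hhg : EqOn h g (Ioo b c)) :
    iteratedDeriv j f b = iteratedDeriv j g b :=
  ((hhf.iteratedDeriv_Icc hab hh hf hj).symm (right_mem_Icc.2 hab.le)).trans
    (hhg.iteratedDeriv_Icc hbc hh hg hj (left_mem_Icc.2 hbc.le))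

theorem ContinuousLinearMap.iteratedDeriv_comp_left (L : E →L[ℝ] F) {f : ℝ → E} {x : ℝ}
    {n : WithTop ℕ∞} (hf : ContDiffAt ℝ n f x) {j : ℕ} (hj : j ≤ n) :
    iteratedDeriv j (L ∘ f) x = L (iteratedDeriv j f x) := by
  simp only [iteratedDeriv_eq_iteratedFDeriv, L.iteratedFDeriv_comp_left hf hj]
  rfl

theorem Function.Periodic.iteratedDeriv {f : ℝ → E} {T : ℝ} (hf : Function.Periodic f T)
    (n : ℕ) : Function.Periodic (iteratedDeriv n f) T := fun x => by
  have := congrFun (iteratedDeriv_comp_add_const n f T) x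
  rwa [show (fun z => f (z + T)) = f from funext hf, eq_comm] at this

theorem Function.Periodic.contDiff_of_forall_mem_Ico {f : ℝ → E} {T a : ℝ} {n : WithTop ℕ∞}
    (hf : Function.Periodic f T) (hT : 0 < T) (h : ∀ x ∈ Ico a (a + T), ContDiffAt ℝ n f x) :
    ContDiff ℝ n f := by
  refine contDiff_iff_contDiffAt.2 fun x => ?_
  have hshift : (fun y => f (y - toIcoDiv hT a x • T)) = f :=
    funext fun y => hf.sub_zsmul_eq _
  have := (h _ (sub_toIcoDiv_zsmul_mem_Ico hT a x)).comp x (contDiffAt_id.sub contDiffAt_const)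
  rwa [← hshift]

end IteratedDeriv

section Lipschitz

variable {X : Type*} [PseudoMetricSpace X] {f : ℝ → X} {K : NNReal}

theorem LipschitzOnWith.congr {g : ℝ → X} {s : Set ℝ} (hf : LipschitzOnWith K f s)
    (h : EqOn f g s) : LipschitzOnWith K g s := fun x hx y hy => by
  rw [← h hx, ← h hy]
  exact hf hx hy

theorem LipschitzOnWith.Icc_union {a b c : ℝ} (hab : LipschitzOnWith K f (Icc a b))
    (hbc : LipschitzOnWith K f (Icc b c)) : LipschitzOnWith K f (Icc a c) := by
  rw [lipschitzOnWith_iff_dist_le_mul] at hab hbc ⊢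
  intro x hx y hy
  wlog hxy : x ≤ y generalizing x y
  · rw [dist_comm, dist_comm x]
    exact this y hy x hx (le_of_not_ge hxy)
  rcases le_total y b with hyb | hby
  · exact hab x ⟨hx.1, hxy.trans hyb⟩ y ⟨hy.1, hyb⟩
  rcases le_total b x with hbx | hxb
  · exact hbc x ⟨hbx, hx.2⟩ y ⟨hby, hy.2⟩
  calc dist (f x) (f y) ≤ dist (f x) (f b) + dist (f b) (f y) := dist_triangle _ _ _
    _ ≤ K * dist x b + K * dist b y :=
      add_le_add (hab x ⟨hx.1, hxb⟩ b ⟨hx.1.trans hxb, le_rfl⟩)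
        (hbc b ⟨le_rfl, hby.trans hy.2⟩ y ⟨hby, hy.2⟩)
    _ = K * dist x y := by
      rw [← mul_add, Real.dist_eq, Real.dist_eq, Real.dist_eq, abs_of_nonpos (by linarith),
        abs_of_nonpos (by linarith), abs_of_nonpos (by linarith)]
      ring

theorem Function.Periodic.lipschitzWith_of_lipschitzOnWith {T a : ℝ}
    (hf : Function.Periodic f T) (hT : 0 < T) (h : LipschitzOnWith K f (Icc a (a + T))) :
    LipschitzWith K f := by
  have hnext : LipschitzOnWith K f (Icc (a + T) (a + T + T)) := by
    rw [lipschitzOnWith_iff_dist_le_mul] at h ⊢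
    intro x hx y hy
    have := h (x - T) ⟨by linarith [hx.1], by linarith [hx.2]⟩
      (y - T) ⟨by linarith [hy.1], by linarith [hy.2]⟩
    rwa [hf.sub_eq, hf.sub_eq, dist_sub_right] at this
  have h₂ := lipschitzOnWith_iff_dist_le_mul.1 (h.Icc_union hnext)
  rw [lipschitzWith_iff_dist_le_mul]
  intro x y
  wlog hxy : x ≤ y generalizing x y
  · rw [dist_comm, dist_comm x]
    exact this y x (le_of_not_ge hxy)
  -- move `x` into `[a, a + T)` and then `y` to within one period to the right of it
  set k := ⌊(x - a) / T⌋
  set n := ⌊(y - x) / T⌋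
  have hk₁ : k * T ≤ x - a := (le_div_iff₀ hT).1 (Int.floor_le _)
  have hk₂ : x - a < (k + 1) * T := (div_lt_iff₀ hT).1 (Int.lt_floor_add_one _)
  have hn₁ : n * T ≤ y - x := (le_div_iff₀ hT).1 (Int.floor_le _)
  have hn₂ : y - x < (n + 1) * T := (div_lt_iff₀ hT).1 (Int.lt_floor_add_one _)
  have hn₀ : (0 : ℝ) ≤ n * T :=
    mul_nonneg (mod_cast Int.floor_nonneg.2 (div_nonneg (sub_nonneg.2 hxy) hT.le)) hT.le
  have := h₂ (x - k * T) ⟨by linarith, by linarith⟩ (y - ↑(k + n) * T)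
    ⟨by push_cast; linarith, by push_cast; linarith⟩
  rw [hf.sub_int_mul_eq, hf.sub_int_mul_eq, Real.dist_eq] at this
  refine this.trans (mul_le_mul_of_nonneg_left ?_ K.2)
  rw [Real.dist_eq, abs_of_nonpos (by push_cast; linarith), abs_of_nonpos (by linarith)]
  push_cast
  linarith

end Lipschitz

section Reflection

local notation "ℝ²" => EuclideanSpace ℝ (Fin 2)

@[simp] lemma reflP_apply_zero (v : ℝ²) : reflP v 0 = v 0 := by simp [reflP]

@[simp] lemma reflP_apply_one (v : ℝ²) : reflP v 1 = -v 1 := by simp [reflP]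

def reflCLM : ℝ² →L[ℝ] ℝ² :=
  LinearMap.toContinuousLinearMap
    { toFun := reflP
      map_add' := fun u v => by ext i; fin_cases i <;> simp [reflP, add_comm]
      map_smul' := fun c v => by ext i; fin_cases i <;> simp [reflP] }

@[simp] lemma coe_reflCLM : ⇑reflCLM = reflP := rfl

def reflPiece (γ : ℝ → ℝ²) (c : ℝ) : ℝ → ℝ² := fun x => reflP (γ (c - x))

variable {γ : ℝ → ℝ²}

lemma ContDiff.reflPiece {n : WithTop ℕ∞} (hγ : ContDiff ℝ n γ) (c : ℝ) :
    ContDiff ℝ n (reflPiece γ c) :=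
  reflCLM.contDiff.comp (hγ.comp (contDiff_const.sub contDiff_id))

lemma iteratedDeriv_reflPiece {N j : ℕ} (hγ : ContDiff ℝ N γ) (hj : j ≤ N) (c x : ℝ) :
    iteratedDeriv j (reflPiece γ c) x = (-1 : ℝ) ^ j • reflP (iteratedDeriv j γ (c - x)) := by
  have hγc : ContDiff ℝ N fun y => γ (c - y) := hγ.comp (contDiff_const.sub contDiff_id)
  rw [show reflPiece γ c = reflCLM ∘ fun y => γ (c - y) from rfl,
    reflCLM.iteratedDeriv_comp_left hγc.contDiffAt (mod_cast hj)]
  simp only [iteratedDeriv_comp_const_sub, map_smul, coe_reflCLM]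

lemma wrap4_add_four (x : ℝ) : wrap4 (x + 4) = wrap4 x := by
  simp only [wrap4, show (x + 4 + 1) / 4 = (x + 1) / 4 + 1 by ring, Int.fract_add_one]

lemma wrap4_of_mem_Ico {x : ℝ} (hx : x ∈ Ico (-1 : ℝ) 3) : wrap4 x = x := by
  rw [wrap4, Int.fract_eq_self.2 ⟨by linarith [hx.1], by linarith [hx.2]⟩]
  ring

lemma reflCurve_periodic (γ : ℝ → ℝ²) : Function.Periodic (reflCurve γ) 4 := fun x => by
  simp only [reflCurve, wrap4_add_four]

lemma reflCurve_of_mem_Icc {x : ℝ} (hx : x ∈ Icc (-1 : ℝ) 1) : reflCurve γ x = γ x := by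
  simp [reflCurve, wrap4_of_mem_Ico ⟨hx.1, by linarith [hx.2]⟩, hx.2]

lemma reflCurve_of_mem_Ioo {x : ℝ} (hx : x ∈ Ioo (1 : ℝ) 3) :
    reflCurve γ x = reflPiece γ 2 x := by
  simp [reflCurve, reflPiece, wrap4_of_mem_Ico ⟨by linarith [hx.1], hx.2⟩, not_le.2 hx.1]

lemma reflCurve_of_mem_Ioo_neg {x : ℝ} (hx : x ∈ Ioo (-3 : ℝ) (-1)) :
    reflCurve γ x = reflPiece γ (-2) x := by
  rw [← reflCurve_periodic γ x, reflCurve_of_mem_Ioo ⟨by linarith [hx.1], by linarith [hx.2]⟩,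
    reflPiece, reflPiece, show 2 - (x + 4) = -2 - x by ring]

lemma reflCurve_eqOn_glue_one : EqOn (reflCurve γ) (glue 1 γ (reflPiece γ 2)) (Ioo (-1) 3) := by
  intro x hx
  by_cases hx1 : x ≤ 1
  · simp [glue, hx1, reflCurve_of_mem_Icc ⟨hx.1.le, hx1⟩]
  · simp [glue, hx1, reflCurve_of_mem_Ioo ⟨not_le.1 hx1, hx.2⟩]

lemma reflCurve_eqOn_glue_neg_one (h : reflP (γ (-1)) = γ (-1)) :
    EqOn (reflCurve γ) (glue (-1) (reflPiece γ (-2)) γ) (Ioo (-3) 1) := by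
  intro x hx
  rcases lt_trichotomy x (-1) with hx1 | rfl | hx1
  · simp [glue, hx1.le, reflCurve_of_mem_Ioo_neg ⟨hx.1, hx1⟩]
  · norm_num [glue, reflPiece, reflCurve_of_mem_Icc, h]
  · simp [glue, not_le.2 hx1, reflCurve_of_mem_Icc ⟨hx1.le, hx.2.le⟩]

theorem contDiff_reflCurve_iff {N : ℕ} (hγ : ContDiff ℝ N γ) :
    ContDiff ℝ N (reflCurve γ) ↔ ∀ j ≤ N, ∀ a ∈ ({-1, 1} : Set ℝ),
      iteratedDeriv j γ a = (-1 : ℝ) ^ j • reflP (iteratedDeriv j γ a) := by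
  have hseam₁ : ∀ j ≤ N, iteratedDeriv j (reflPiece γ 2) 1 =
      (-1 : ℝ) ^ j • reflP (iteratedDeriv j γ 1) := fun j hj => by
    rw [iteratedDeriv_reflPiece hγ hj]; norm_num
  have hseam₂ : ∀ j ≤ N, iteratedDeriv j (reflPiece γ (-2)) (-1) =
      (-1 : ℝ) ^ j • reflP (iteratedDeriv j γ (-1)) := fun j hj => by
    rw [iteratedDeriv_reflPiece hγ hj]; norm_num
  constructor
  · rintro hR j hj a (rfl | rfl)
    · rw [← hseam₂ j hj]
      exact (iteratedDeriv_eq_of_eqOn_Ioo_of_eqOn_Ioo (by norm_num) (by norm_num)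
        (hγ.reflPiece (-2)) hγ hR hj (fun x hx => reflCurve_of_mem_Ioo_neg hx)
        (fun x hx => reflCurve_of_mem_Icc ⟨hx.1.le, hx.2.le⟩)).symm
    · rw [← hseam₁ j hj]
      exact iteratedDeriv_eq_of_eqOn_Ioo_of_eqOn_Ioo (by norm_num) (by norm_num)
        hγ (hγ.reflPiece 2) hR hj (fun x hx => reflCurve_of_mem_Icc ⟨hx.1.le, hx.2.le⟩)
        (fun x hx => reflCurve_of_mem_Ioo hx)
  · intro hmatch
    have hfix : reflP (γ (-1)) = γ (-1) := by simpa using (hmatch 0 N.zero_le (-1) (by simp)).symm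
    refine (reflCurve_periodic γ).contDiff_of_forall_mem_Ico four_pos (a := -1) fun x hx => ?_
    rcases hx.1.eq_or_lt with rfl | hx₁
    · refine (contDiff_glue (hγ.reflPiece (-2)) hγ fun j hj => ?_).contDiffAt.congr_of_eventuallyEq
        ((reflCurve_eqOn_glue_neg_one hfix).eventuallyEq_of_mem (Ioo_mem_nhds (by norm_num)
          (by norm_num)))
      rw [hseam₂ j hj]
      exact (hmatch j hj (-1) (by simp)).symm
    · refine (contDiff_glue hγ (hγ.reflPiece 2) fun j hj => ?_).contDiffAt.congr_of_eventuallyEq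
        (reflCurve_eqOn_glue_one.eventuallyEq_of_mem (Ioo_mem_nhds hx₁ (by linarith [hx.2])))
      rw [hseam₁ j hj]
      exact hmatch j hj 1 (by simp)

theorem exists_lipschitzWith_iteratedDeriv_reflCurve {N : ℕ} (hγ : ContDiff ℝ (N + 1 : ℕ) γ)
    (hR : ContDiff ℝ N (reflCurve γ)) : ∃ K, LipschitzWith K (iteratedDeriv N (reflCurve γ)) := by
  have hγN : ContDiff ℝ N γ := hγ.of_le (by norm_cast; omega)
  have lipschitzOn (f : ℝ → ℝ²) (hf : ContDiff ℝ (N + 1 : ℕ) f) (a b : ℝ) :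
      ∃ K, LipschitzOnWith K (iteratedDeriv N f) (Icc a b) :=
    (contDiff_nat_succ_iff_contDiff_one_iteratedDeriv.1 hf).2.locallyLipschitz
      |>.locallyLipschitzOn.exists_lipschitzOnWith_of_compact isCompact_Icc
  obtain ⟨K₁, h₁⟩ := lipschitzOn γ hγ (-1) 1
  obtain ⟨K₂, h₂⟩ := lipschitzOn (reflPiece γ 2) (hγ.reflPiece 2) 1 3
  have e₁ : EqOn (iteratedDeriv N γ) (iteratedDeriv N (reflCurve γ)) (Icc (-1) 1) :=
    EqOn.iteratedDeriv_Icc (by norm_num) hγN hR le_rfl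
      fun x hx => (reflCurve_of_mem_Icc ⟨hx.1.le, hx.2.le⟩).symm
  have e₂ : EqOn (iteratedDeriv N (reflPiece γ 2)) (iteratedDeriv N (reflCurve γ)) (Icc 1 3) :=
    EqOn.iteratedDeriv_Icc (by norm_num) (hγN.reflPiece 2) hR le_rfl
      fun x hx => (reflCurve_of_mem_Ioo hx).symm
  refine ⟨max K₁ K₂, ((reflCurve_periodic γ).iteratedDeriv N).lipschitzWith_of_lipschitzOnWith
    four_pos (a := -1) ?_⟩
  norm_num
  exact ((h₁.weaken le_sup_left).congr e₁).Icc_union ((h₂.weaken le_sup_right).congr e₂)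

lemma eq_neg_one_pow_smul_reflP_iff_of_even {j : ℕ} (hj : Even j) (v : ℝ²) :
    v = (-1 : ℝ) ^ j • reflP v ↔ v 1 = 0 := by
  rw [hj.neg_one_pow, one_smul]
  constructor
  · intro h
    have := congrArg (· 1) h
    simp only [reflP_apply_one] at this
    linarith
  · intro h
    ext i
    fin_cases i <;> simp [reflP, h]

lemma eq_neg_one_pow_smul_reflP_iff_of_odd {j : ℕ} (hj : Odd j) (v : ℝ²) :
    v = (-1 : ℝ) ^ j • reflP v ↔ v 0 = 0 := by
  rw [hj.neg_one_pow, neg_one_smul]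
  constructor
  · intro h
    have := congrArg (· 0) h
    simp only [PiLp.neg_apply, reflP_apply_zero] at this
    linarith
  · intro h
    ext i
    fin_cases i <;> simp [reflP, h]

lemma iteratedDeriv_apply_coord {n : WithTop ℕ∞} {x : ℝ} (hγ : ContDiffAt ℝ n γ x) {j : ℕ}
    (hj : j ≤ n) (i : Fin 2) : iteratedDeriv j (fun y => γ y i) x = iteratedDeriv j γ x i :=
  (EuclideanSpace.proj i).iteratedDeriv_comp_left hγ hj

theorem reflP_matching_iff {m : ℕ} (hγ : ContDiff ℝ (2 * m : ℕ) γ)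
    (hb : ∀ a ∈ ({-1, 1} : Set ℝ), γ a 1 = 0) :
    (∀ j ≤ 2 * m, ∀ a ∈ ({-1, 1} : Set ℝ),
      iteratedDeriv j γ a = (-1 : ℝ) ^ j • reflP (iteratedDeriv j γ a)) ↔
    ∀ k : ℕ, 1 ≤ k → k ≤ m → ∀ a ∈ ({-1, 1} : Set ℝ),
      iteratedDeriv (2 * k) (fun y => γ y 1) a = 0 ∧
      iteratedDeriv (2 * k - 1) (fun y => γ y 0) a = 0 := by
  have coord {j : ℕ} (hj : j ≤ 2 * m) (a : ℝ) (i : Fin 2) :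
      iteratedDeriv j (fun y => γ y i) a = iteratedDeriv j γ a i :=
    iteratedDeriv_apply_coord hγ.contDiffAt (mod_cast hj) i
  constructor
  · intro hmatch k hk₁ hk a ha
    rw [coord (by omega), coord (by omega)]
    exact ⟨(eq_neg_one_pow_smul_reflP_iff_of_even (even_two_mul k) _).1
        (hmatch (2 * k) (by omega) a ha),
      (eq_neg_one_pow_smul_reflP_iff_of_odd (Nat.odd_iff.2 (by omega)) _).1
        (hmatch (2 * k - 1) (by omega) a ha)⟩
  · intro h j hj a ha
    obtain ⟨k, rfl | rfl⟩ := Nat.even_or_odd' j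
    · refine (eq_neg_one_pow_smul_reflP_iff_of_even (even_two_mul k) _).2 ?_
      rcases k.eq_zero_or_pos with rfl | hk
      · simpa using hb a ha
      · rw [← coord hj]
        exact (h k hk (by omega) a ha).1
    · refine (eq_neg_one_pow_smul_reflP_iff_of_odd (odd_two_mul_add_one k) _).2 ?_
      have := (h (k + 1) (by omega) (by omega) a ha).2
      rwa [show 2 * (k + 1) - 1 = 2 * k + 1 by omega, coord hj] at this

end Reflection

theorem statement17_general
    (γ : ℝ → EuclideanSpace ℝ (Fin 2))
    (hγ : ContDiff ℝ (⊤ : ℕ∞) γ)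
    (hb : ∀ x ∈ ({-1, 1} : Set ℝ), γ x 1 = 0 ∧ deriv γ x 0 = 0)
    (m : ℕ) :
    (ContDiff ℝ ((2 * m : ℕ) : ℕ∞) (reflCurve γ) ∧
      ∃ K : NNReal, LipschitzWith K (iteratedDeriv (2 * m) (reflCurve γ)))
    ↔ (∀ k : ℕ, 1 ≤ k → k ≤ m → ∀ x ∈ ({-1, 1} : Set ℝ),
        iteratedDeriv (2 * k) (fun y => γ y 1) x = 0 ∧
        iteratedDeriv (2 * k - 1) (fun y => γ y 0) x = 0) := by
  have hγ' {n : ℕ} : ContDiff ℝ n γ := hγ.of_le (mod_cast le_top)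
  rw [← reflP_matching_iff hγ' fun x hx => (hb x hx).1, ← contDiff_reflCurve_iff hγ']
  exact ⟨And.left, fun hR => ⟨hR, exists_lipschitzWith_iteratedDeriv_reflCurve hγ' hR⟩⟩

/-- regularity of the reflected curve (Remark 4.15, equation (4.28)). -/
theorem statement17
    (γ : ℝ → EuclideanSpace ℝ (Fin 2))
    (hγ : ContDiff ℝ (⊤ : ℕ∞) γ)
    (himm : ∀ x ∈ Icc (-1:ℝ) 1, deriv γ x ≠ 0)
    (hb : ∀ x ∈ ({-1, 1} : Set ℝ), γ x 1 = 0 ∧ deriv γ x 0 = 0)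
    (m : ℕ) (hm : 1 ≤ m) :
    (ContDiff ℝ ((2 * m : ℕ) : ℕ∞) (reflCurve γ) ∧
      ∃ K : NNReal, LipschitzWith K (iteratedDeriv (2 * m) (reflCurve γ)))
    ↔ (∀ k : ℕ, 1 ≤ k → k ≤ m → ∀ x ∈ ({-1, 1} : Set ℝ),
        iteratedDeriv (2 * k) (fun y => γ y 1) x = 0 ∧
        iteratedDeriv (2 * k - 1) (fun y => γ y 0) x = 0) :=
  statement17_general γ hγ hb m
end
end

section
/- Let p ∈ (1,∞), s ∈ (1/p, 1), N ∈ ℕ and T' > 0. Then there exists a constant C = C(T', s, p) > 0 such that for all T ∈ (0, T'] and all continuous functions f, g: [0,T] → ℝᴺ with finite fractional seminorms [f]_{W^{s,p}(0,T)}, [g]_{W^{s,p}(0,T)} < ∞ and g(0) = 0, the scalar product h = ⟨f, g⟩: [0,T] → ℝ satisfies ‖h‖_{W^{s,p}(0,T)} ≤ C ( [f]_{W^{s,p}(0,T)} + sup_{t∈[0,T]}|f(t)| ) ‖g‖_{W^{s,p}(0,T)}. -/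
open Set MeasureTheory Filter
open scoped RealInnerProductSpace

noncomputable section

variable {n : ℕ}

open scoped ENNReal

/-- The `p`-th power of the Sobolev–Slobodetskii seminorm `[f]_{W^{s,p}(0,T)}`,
as a Lebesgue integral in `ℝ≥0∞`. -/
def slobGapP (p s T : ℝ) {F : Type*} [NormedAddCommGroup F] (f : ℝ → F) : ℝ≥0∞ :=
  ∫⁻ q in (Set.Ioo (0:ℝ) T) ×ˢ (Set.Ioo (0:ℝ) T),
    ENNReal.ofReal (‖f q.1 - f q.2‖ ^ p / |q.1 - q.2| ^ (1 + s * p))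

/-- The Sobolev–Slobodetskii seminorm `[f]_{W^{s,p}(0,T)}`. -/
def slobSemi (p s T : ℝ) {F : Type*} [NormedAddCommGroup F] (f : ℝ → F) : ℝ :=
  (slobGapP p s T f).toReal ^ (1 / p)

/-- The Sobolev–Slobodetskii norm
`‖f‖_{W^{s,p}(0,T)} = (‖f‖_{L^p(0,T)}^p + [f]_{W^{s,p}(0,T)}^p)^{1/p}`. -/
def slobNorm (p s T : ℝ) {F : Type*} [NormedAddCommGroup F] (f : ℝ → F) : ℝ :=
  ((∫ x in (0:ℝ)..T, ‖f x‖ ^ p) + (slobGapP p s T f).toReal) ^ (1 / p)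

open Topology

/-!
For `s p > 1` a finite Gagliardo seminorm controls oscillations at scale `ℓ` by `ℓ^{s-1/p} [g]`.
Fix `x ∈ [0,T]` and let `J_k` be the image of `(0,T)` under the homothety of ratio `2⁻ᵏ` centred
at `x`. By Markov's inequality one can pick `u_{k+1} ∈ J_{k+1}` at which the profile
`∫ |g u - g v|^p / |u - v|^{1+sp} dv` is at most `3 [g]^p / |J_{k+1}|`, and at which the kernel
`|g u - g u_k|^p / |u - u_k|^{1+sp}` is at most three times its average over `J_{k+1}`. Then
`|g u_{k+1} - g u_k| ≲ (2⁻ᵏ T)^{s-1/p} [g]`, a geometric series, and `u_k → x`, so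
`|g x - g u_0| ≲ T^{s-1/p} [g]`; with `g 0 = 0` this gives `sup |g| ≤ C [g]`.

The product estimate then comes from
`⟪f x, g x⟫ - ⟪f y, g y⟫ = ⟪f x - f y, g y⟫ + ⟪f x, g x - g y⟫`, which bounds the kernel of `⟪f, g⟫`
by `sup |f|` times the kernel of `g` plus `sup |g| ≲ [g]` times the kernel of `f`.
-/

lemma meas_ofReal_div_lt_le {α : Type*} [MeasurableSpace α] {μ : Measure α} {F : α → ℝ≥0∞}
    (hF : AEMeasurable F μ) {D ε : ℝ} (hε : 0 < ε) (hFD : ∫⁻ x, F x ∂μ ≤ ENNReal.ofReal D) :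
    μ {x | ENNReal.ofReal (D / ε) < F x} ≤ ENNReal.ofReal ε := by
  rcases le_or_gt D 0 with hD | hD
  · have hF0 : F =ᵐ[μ] 0 :=
      (lintegral_eq_zero_iff' hF).1 (le_antisymm (hFD.trans (by simp [hD])) bot_le)
    exact (measure_mono_null (fun x hx => (zero_le.trans_lt hx).ne') (ae_iff.1 hF0)).trans_le
      zero_le
  · calc μ {x | ENNReal.ofReal (D / ε) < F x}
        ≤ μ {x | ENNReal.ofReal (D / ε) ≤ F x} :=
          measure_mono (ofPred_subset_ofPred.2 fun _ => le_of_lt)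
      _ ≤ (∫⁻ x, F x ∂μ) / ENNReal.ofReal (D / ε) :=
          meas_ge_le_lintegral_div hF (by simp [hD, hε]) ENNReal.ofReal_ne_top
      _ ≤ ENNReal.ofReal D / ENNReal.ofReal (D / ε) := by gcongr
      _ ≤ ENNReal.ofReal ε := ENNReal.div_le_of_le_mul <| by
          rw [← ENNReal.ofReal_mul hε.le, mul_div_cancel₀ _ hε.ne']

lemma exists_mem_Ioo_le_of_setLIntegral_le {a b : ℝ} (hab : a < b) {F G : ℝ → ℝ≥0∞}
    (hF : Measurable F) (hG : Measurable G) {D D' : ℝ}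
    (hFD : ∫⁻ x in Ioo a b, F x ≤ ENNReal.ofReal D)
    (hGD : ∫⁻ x in Ioo a b, G x ≤ ENNReal.ofReal D') :
    ∃ v ∈ Ioo a b, F v ≤ ENNReal.ofReal (3 * D / (b - a)) ∧
      G v ≤ ENNReal.ofReal (3 * D' / (b - a)) := by
  have hℓ : 0 < (b - a) / 3 := by linarith
  have hthird : ∀ c : ℝ, 3 * c / (b - a) = c / ((b - a) / 3) := fun c => by field_simp
  by_contra! hbad
  have hcover : Ioo a b ⊆ {x | ENNReal.ofReal (D / ((b - a) / 3)) < F x} ∪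
      {x | ENNReal.ofReal (D' / ((b - a) / 3)) < G x} := fun v hv => by
    rw [← hthird, ← hthird]
    by_cases hFv : F v ≤ ENNReal.ofReal (3 * D / (b - a))
    · exact Or.inr (hbad v hv hFv)
    · exact Or.inl (not_le.1 hFv)
  have hvol : ENNReal.ofReal (b - a) ≤
      ENNReal.ofReal ((b - a) / 3) + ENNReal.ofReal ((b - a) / 3) := by
    calc ENNReal.ofReal (b - a) = volume.restrict (Ioo a b) (Ioo a b) := by
          rw [Measure.restrict_apply_self, Real.volume_Ioo]
      _ ≤ ENNReal.ofReal ((b - a) / 3) + ENNReal.ofReal ((b - a) / 3) :=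
          (measure_mono hcover).trans ((measure_union_le _ _).trans (add_le_add
            (meas_ofReal_div_lt_le hF.aemeasurable hℓ hFD)
            (meas_ofReal_div_lt_le hG.aemeasurable hℓ hGD)))
  rw [← ENNReal.ofReal_add hℓ.le hℓ.le, ENNReal.ofReal_le_ofReal_iff (by linarith)] at hvol
  linarith

lemma add_rpow_le_two_rpow_mul {a b p : ℝ} (ha : 0 ≤ a) (hb : 0 ≤ b) (hp : 1 ≤ p) :
    (a + b) ^ p ≤ 2 ^ (p - 1) * (a ^ p + b ^ p) := by
  lift a to NNReal using ha
  lift b to NNReal using hb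
  exact_mod_cast NNReal.rpow_add_le_mul_rpow_add_rpow a b hp

lemma norm_inner_sub_inner_le {F : Type*} [NormedAddCommGroup F] [InnerProductSpace ℝ F]
    (a a' b b' : F) : ‖⟪a, b⟫ - ⟪a', b'⟫‖ ≤ ‖b'‖ * ‖a - a'‖ + ‖a‖ * ‖b - b'‖ := by
  have hsplit : ⟪a, b⟫ - ⟪a', b'⟫ = ⟪a - a', b'⟫ + ⟪a, b - b'⟫ := by
    rw [inner_sub_left, inner_sub_right]
    ring
  rw [hsplit, mul_comm ‖b'‖]
  exact (norm_add_le _ _).trans (add_le_add (norm_inner_le_norm _ _) (norm_inner_le_norm _ _))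

lemma norm_le_biSup_of_continuousOn {X E : Type*} [TopologicalSpace X] [NormedAddCommGroup E]
    {f : X → E} {K : Set X} (hK : IsCompact K) (hf : ContinuousOn f K) {x : X} (hx : x ∈ K) :
    ‖f x‖ ≤ ⨆ t ∈ K, ‖f t‖ := by
  refine le_ciSup₂ (f := fun t (_ : t ∈ K) => ‖f t‖) ?_ x hx
  refine (hK.image_of_continuousOn hf.norm).bddAbove.mono ?_
  rintro _ ⟨_, ⟨t, rfl⟩, ⟨ht, rfl⟩⟩
  exact ⟨t, ht, rfl⟩

lemma ContinuousOn.exists_continuous_eqOn_Icc {α β : Type*} [LinearOrder α] [TopologicalSpace α]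
    [OrderTopology α] [TopologicalSpace β] {f : α → β} {a b : α} (hab : a ≤ b)
    (hf : ContinuousOn f (Icc a b)) :
    ∃ f' : α → β, Continuous f' ∧ EqOn f' f (Icc a b) :=
  ⟨IccExtend hab ((Icc a b).domRestrict f), continuous_IccExtend_iff.2 hf.domRestrict,
    fun _ hx => IccExtend_of_mem hab _ hx⟩

section Slobodetskii

variable {E : Type*} [NormedAddCommGroup E] {p s T : ℝ} {g : ℝ → E}

lemma slobGapP_congr {f f' : ℝ → E} (h : EqOn f f' (Ioo 0 T)) :
    slobGapP p s T f = slobGapP p s T f' :=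
  setLIntegral_congr_fun (measurableSet_Ioo.prod measurableSet_Ioo)
    fun q hq => by simp only [h hq.1, h hq.2]

lemma slobNorm_congr {f f' : ℝ → E} (hT : 0 ≤ T) (h : EqOn f f' (Icc 0 T)) :
    slobNorm p s T f = slobNorm p s T f' := by
  rw [slobNorm, slobNorm, slobGapP_congr (h.mono Ioo_subset_Icc_self),
    intervalIntegral.integral_congr (g := fun x => ‖f' x‖ ^ p)
      fun x hx => by simp only [h (uIcc_of_le hT ▸ hx)]]

lemma slobSemi_rpow (hp : 0 < p) (f : ℝ → E) :
    slobSemi p s T f ^ p = (slobGapP p s T f).toReal := by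
  rw [slobSemi, one_div, Real.rpow_inv_rpow ENNReal.toReal_nonneg hp.ne']

lemma integral_norm_rpow_add_slobGapP_nonneg (hT : 0 ≤ T) (f : ℝ → E) :
    0 ≤ (∫ x in (0:ℝ)..T, ‖f x‖ ^ p) + (slobGapP p s T f).toReal :=
  add_nonneg (intervalIntegral.integral_nonneg hT fun x _ => by positivity) ENNReal.toReal_nonneg

lemma slobNorm_rpow (hp : 0 < p) (hT : 0 ≤ T) (f : ℝ → E) :
    slobNorm p s T f ^ p = (∫ x in (0:ℝ)..T, ‖f x‖ ^ p) + (slobGapP p s T f).toReal := by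
  rw [slobNorm, one_div, Real.rpow_inv_rpow (integral_norm_rpow_add_slobGapP_nonneg hT f) hp.ne']

lemma slobNorm_le_of_rpow_le (hp : 0 < p) (hT : 0 ≤ T) {f : ℝ → E} {Z : ℝ} (hZ : 0 ≤ Z)
    (h : (∫ x in (0:ℝ)..T, ‖f x‖ ^ p) + (slobGapP p s T f).toReal ≤ Z ^ p) :
    slobNorm p s T f ≤ Z := by
  calc slobNorm p s T f ≤ (Z ^ p) ^ (1 / p) :=
        Real.rpow_le_rpow (integral_norm_rpow_add_slobGapP_nonneg hT f) h (by positivity)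
    _ = Z := by rw [one_div, Real.rpow_rpow_inv hZ hp.ne']

def slobKernel (p s : ℝ) (g : ℝ → E) (x y : ℝ) : ℝ≥0∞ :=
  ENNReal.ofReal (‖g x - g y‖ ^ p / |x - y| ^ (1 + s * p))

lemma slobKernel_comm (p s : ℝ) (g : ℝ → E) (x y : ℝ) :
    slobKernel p s g x y = slobKernel p s g y x := by
  simp only [slobKernel, norm_sub_rev, abs_sub_comm]

lemma measurable_slobKernel (p s : ℝ) (hg : Continuous g) :
    Measurable fun q : ℝ × ℝ => slobKernel p s g q.1 q.2 :=
  ((((hg.comp continuous_fst).sub (hg.comp continuous_snd)).norm.measurable.pow_const p).div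
    ((continuous_fst.sub continuous_snd).abs.measurable.pow_const _)).ennreal_ofReal

lemma norm_sub_rpow_le_of_slobKernel_le (hp : 0 < p) (hsp : 0 ≤ 1 + s * p) {x y K δ : ℝ}
    (hK : 0 ≤ K) (hker : slobKernel p s g x y ≤ ENNReal.ofReal K) (hxy : |x - y| ≤ δ) :
    ‖g x - g y‖ ^ p ≤ K * δ ^ (1 + s * p) := by
  rcases eq_or_ne x y with rfl | hne
  · rw [sub_self, norm_zero, Real.zero_rpow hp.ne']
    have : 0 ≤ δ := (abs_nonneg _).trans hxy
    positivity
  · have hd : 0 < |x - y| ^ (1 + s * p) :=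
      Real.rpow_pos_of_pos (abs_pos.2 (sub_ne_zero.2 hne)) _
    rw [slobKernel, ENNReal.ofReal_le_ofReal_iff hK, div_le_iff₀ hd] at hker
    exact hker.trans (mul_le_mul_of_nonneg_left (Real.rpow_le_rpow (abs_nonneg _) hxy hsp) hK)

def slobProfile (p s T : ℝ) (g : ℝ → E) (x : ℝ) : ℝ≥0∞ :=
  ∫⁻ y in Ioo 0 T, slobKernel p s g x y

lemma measurable_slobProfile (hg : Continuous g) : Measurable (slobProfile p s T g) :=
  (measurable_slobKernel p s hg).lintegral_prod_right'

lemma setLIntegral_slobProfile (hg : Continuous g) :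
    ∫⁻ x in Ioo 0 T, slobProfile p s T g x = slobGapP p s T g := by
  rw [slobGapP, Measure.volume_eq_prod, ← Measure.prod_restrict]
  exact (lintegral_prod _ (measurable_slobKernel p s hg).aemeasurable).symm

def homothetyIoo (T x r : ℝ) : Set ℝ := Ioo (x - r * x) (x + r * (T - x))

lemma homothetyIoo_subset {x r : ℝ} (hx : x ∈ Icc 0 T) (hr1 : r ≤ 1) :
    homothetyIoo T x r ⊆ Ioo 0 T :=
  Ioo_subset_Ioo (by nlinarith [hx.1]) (by nlinarith [hx.2])

lemma abs_sub_le_of_mem_homothetyIoo {x r w : ℝ} (hx : x ∈ Icc 0 T) (hr : 0 ≤ r)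
    (hw : w ∈ homothetyIoo T x r) : |w - x| ≤ r * T :=
  abs_sub_le_iff.2 ⟨by nlinarith [hw.2, hx.1], by nlinarith [hw.1, hx.2]⟩

lemma exists_mem_homothetyIoo_slobProfile_le (hg : Continuous g) (hT : 0 < T) {b c x r u : ℝ}
    (hb : slobGapP p s T g ≤ ENNReal.ofReal b) (hx : x ∈ Icc 0 T) (hr : 0 < r) (hr1 : r ≤ 1)
    (hu : slobProfile p s T g u ≤ ENNReal.ofReal c) :
    ∃ v ∈ homothetyIoo T x r, slobProfile p s T g v ≤ ENNReal.ofReal (3 * b / (r * T)) ∧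
      slobKernel p s g v u ≤ ENNReal.ofReal (3 * c / (r * T)) := by
  have hsub := homothetyIoo_subset hx hr1
  have hlen : x + r * (T - x) - (x - r * x) = r * T := by ring
  rw [← hlen]
  refine exists_mem_Ioo_le_of_setLIntegral_le (by nlinarith [mul_pos hr hT])
    (measurable_slobProfile hg)
    ((measurable_slobKernel p s hg).comp (measurable_id.prodMk measurable_const)) ?_ ?_
  · calc ∫⁻ w in homothetyIoo T x r, slobProfile p s T g w
        ≤ ∫⁻ w in Ioo 0 T, slobProfile p s T g w := lintegral_mono_set hsub
      _ = slobGapP p s T g := setLIntegral_slobProfile hg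
      _ ≤ ENNReal.ofReal b := hb
  · calc ∫⁻ w in homothetyIoo T x r, slobKernel p s g w u
        ≤ ∫⁻ w in Ioo 0 T, slobKernel p s g u w := by
          simp_rw [slobKernel_comm p s g _ u]
          exact lintegral_mono_set hsub
      _ ≤ ENNReal.ofReal c := hu

lemma exists_next_slobProfile_le (hp : 0 < p) (hsp : 1 < s * p) (hg : Continuous g)
    (hT : 0 < T) {b x : ℝ} (hb0 : 0 ≤ b) (hb : slobGapP p s T g ≤ ENNReal.ofReal b)
    (hx : x ∈ Icc 0 T) (k : ℕ) {u : ℝ} (hu : u ∈ homothetyIoo T x (2⁻¹ ^ k))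
    (hpu : slobProfile p s T g u ≤ ENNReal.ofReal (3 * b / (2⁻¹ ^ k * T))) :
    ∃ v ∈ homothetyIoo T x (2⁻¹ ^ (k + 1)),
      slobProfile p s T g v ≤ ENNReal.ofReal (3 * b / (2⁻¹ ^ (k + 1) * T)) ∧
      ‖g u - g v‖ ≤ (18 * 2 ^ (1 + s * p) * b) ^ (1 / p) * T ^ (s - 1 / p) *
        ((2:ℝ)⁻¹ ^ (s - 1 / p)) ^ k := by
  obtain ⟨v, hv, hpv, hker⟩ := exists_mem_homothetyIoo_slobProfile_le hg hT hb hx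
    (r := 2⁻¹ ^ (k + 1)) (by positivity) (pow_le_one₀ (by norm_num) (by norm_num)) hpu
  refine ⟨v, hv, hpv, ?_⟩
  set ℓ : ℝ := 2⁻¹ ^ k * T
  have hℓ : 0 < ℓ := by positivity
  have hℓ' : 2⁻¹ ^ (k + 1) * T = ℓ / 2 := by simp only [ℓ]; ring
  have hvx := abs_sub_le_of_mem_homothetyIoo hx (by positivity) hv
  have hux : |u - x| ≤ ℓ := abs_sub_le_of_mem_homothetyIoo hx (by positivity) hu
  rw [hℓ'] at hker hvx
  have hdist : |v - u| ≤ 2 * ℓ := by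
    calc |v - u| ≤ |v - x| + |u - x| := abs_sub_comm x u ▸ abs_sub_le v x u
      _ ≤ 2 * ℓ := by linarith
  have hβ : (s - 1 / p) * p = s * p - 1 := by field_simp
  have hpow : ‖g v - g u‖ ^ p ≤ (18 * 2 ^ (1 + s * p) * b) * ℓ ^ ((s - 1 / p) * p) := by
    calc ‖g v - g u‖ ^ p ≤ 3 * (3 * b / ℓ) / (ℓ / 2) * (2 * ℓ) ^ (1 + s * p) :=
          norm_sub_rpow_le_of_slobKernel_le hp (by linarith) (by positivity) hker hdist
      _ = (18 * 2 ^ (1 + s * p) * b) * ℓ ^ ((s - 1 / p) * p) := by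
          rw [Real.mul_rpow (by norm_num) hℓ.le, hβ, show 1 + s * p = (s * p - 1) + 2 by ring,
            Real.rpow_add hℓ, Real.rpow_two]
          field_simp
          ring
  calc ‖g u - g v‖ = (‖g v - g u‖ ^ p) ^ (1 / p) := by
        rw [← Real.rpow_mul (norm_nonneg _), mul_one_div_cancel hp.ne', Real.rpow_one,
          norm_sub_rev]
    _ ≤ ((18 * 2 ^ (1 + s * p) * b) * ℓ ^ ((s - 1 / p) * p)) ^ (1 / p) :=
        Real.rpow_le_rpow (by positivity) hpow (by positivity)
    _ = _ := by
        rw [Real.mul_rpow (by positivity) (by positivity), ← Real.rpow_mul hℓ.le,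
          mul_assoc (s - 1 / p), mul_one_div_cancel hp.ne', mul_one,
          Real.mul_rpow (by positivity) hT.le, ← Real.rpow_pow_comm (by norm_num)]
        ring

lemma norm_sub_le_of_slobProfile_le (hp : 1 < p) (hsp : 1 < s * p) (hg : Continuous g)
    (hT : 0 < T) (hgap : slobGapP p s T g ≠ ⊤) {x u₀ : ℝ} (hx : x ∈ Icc 0 T)
    (hu₀ : u₀ ∈ Ioo 0 T)
    (hpu₀ : slobProfile p s T g u₀ ≤ ENNReal.ofReal (3 * (slobGapP p s T g).toReal / T)) :
    ‖g u₀ - g x‖ ≤ (18 * 2 ^ (1 + s * p)) ^ (1 / p) / (1 - 2⁻¹ ^ (s - 1 / p)) *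
      T ^ (s - 1 / p) * slobSemi p s T g := by
  set b := (slobGapP p s T g).toReal
  have hρ : (2:ℝ)⁻¹ ^ (s - 1 / p) < 1 := by
    refine Real.rpow_lt_one (by norm_num) (by norm_num) ?_
    rw [sub_pos, div_lt_iff₀ (by linarith)]
    exact hsp
  choose! next hnext_mem hnext_le hnext_dist using fun k (u : ℝ) =>
    exists_next_slobProfile_le (by linarith) hsp hg hT ENNReal.toReal_nonneg
      (ENNReal.ofReal_toReal hgap).ge hx k (u := u)
  let u : ℕ → ℝ := fun k => Nat.rec u₀ next k
  have hu : ∀ k, u k ∈ homothetyIoo T x (2⁻¹ ^ k) ∧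
      slobProfile p s T g (u k) ≤ ENNReal.ofReal (3 * b / (2⁻¹ ^ k * T)) := by
    intro k
    induction k with
    | zero => simpa [homothetyIoo] using ⟨hu₀, hpu₀⟩
    | succ k ih => exact ⟨hnext_mem k _ ih.1 ih.2, hnext_le k _ ih.1 ih.2⟩
  have hlim : Tendsto u atTop (𝓝 x) := by
    refine tendsto_iff_dist_tendsto_zero.2 (squeeze_zero (fun _ => dist_nonneg)
      (fun k => (Real.dist_eq _ _).trans_le
        (abs_sub_le_of_mem_homothetyIoo hx (by positivity) (hu k).1)) ?_)
    simpa using (tendsto_pow_atTop_nhds_zero_of_lt_one (r := (2⁻¹ : ℝ)) (by norm_num)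
      (by norm_num)).mul_const T
  have hgeom := dist_le_of_le_geometric_of_tendsto₀ _ _ hρ
    (fun k => (dist_eq_norm _ _).trans_le (hnext_dist k _ (hu k).1 (hu k).2))
    ((hg.tendsto x).comp hlim)
  rw [dist_eq_norm, Real.mul_rpow (by positivity) ENNReal.toReal_nonneg] at hgeom
  refine hgeom.trans_eq ?_
  rw [slobSemi]
  ring

theorem exists_norm_le_mul_slobSemi (hp : 1 < p) (hs : 1 / p < s) {T' : ℝ} (hT' : 0 < T') :
    ∃ C₀ : ℝ, 0 < C₀ ∧ ∀ T : ℝ, 0 < T → T ≤ T' → ∀ g : ℝ → E, Continuous g →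
      slobGapP p s T g ≠ ⊤ → g 0 = 0 → ∀ t ∈ Icc 0 T, ‖g t‖ ≤ C₀ * slobSemi p s T g := by
  have hp0 : 0 < p := by linarith
  have hsp : 1 < s * p := by rwa [div_lt_iff₀ hp0] at hs
  have hβ : 0 < s - 1 / p := by linarith
  have hρ : (2⁻¹ : ℝ) ^ (s - 1 / p) < 1 := Real.rpow_lt_one (by norm_num) (by norm_num) hβ
  set K : ℝ := (18 * 2 ^ (1 + s * p)) ^ (1 / p) / (1 - 2⁻¹ ^ (s - 1 / p))
  have hK0 : 0 < K := div_pos (by positivity) (by linarith)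
  refine ⟨2 * K * T' ^ (s - 1 / p), by positivity, ?_⟩
  intro T hT hTT' g hg hgap hg0 t ht
  have hint : ∫⁻ x in Ioo 0 T, slobProfile p s T g x ≤
      ENNReal.ofReal (slobGapP p s T g).toReal := by
    rw [setLIntegral_slobProfile hg, ENNReal.ofReal_toReal hgap]
  obtain ⟨u₀, hu₀, hpu₀, -⟩ := exists_mem_Ioo_le_of_setLIntegral_le hT
    (measurable_slobProfile hg) (measurable_slobProfile hg) hint hint
  rw [sub_zero] at hpu₀
  have hut : ‖g u₀ - g t‖ ≤ K * T ^ (s - 1 / p) * slobSemi p s T g :=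
    norm_sub_le_of_slobProfile_le hp hsp hg hT hgap ht hu₀ hpu₀
  have hu0 : ‖g u₀ - g 0‖ ≤ K * T ^ (s - 1 / p) * slobSemi p s T g :=
    norm_sub_le_of_slobProfile_le hp hsp hg hT hgap (left_mem_Icc.2 hT.le) hu₀ hpu₀
  have hTT'β : T ^ (s - 1 / p) ≤ T' ^ (s - 1 / p) := Real.rpow_le_rpow hT.le hTT' hβ.le
  have hsemi : 0 ≤ slobSemi p s T g := Real.rpow_nonneg ENNReal.toReal_nonneg _
  calc ‖g t‖ = ‖(g u₀ - g t) - (g u₀ - g 0)‖ := by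
        rw [hg0, sub_zero, sub_sub_cancel_left, norm_neg]
    _ ≤ ‖g u₀ - g t‖ + ‖g u₀ - g 0‖ := norm_sub_le _ _
    _ ≤ 2 * K * T ^ (s - 1 / p) * slobSemi p s T g := by linarith
    _ ≤ 2 * K * T' ^ (s - 1 / p) * slobSemi p s T g := by gcongr

end Slobodetskii

section Product

variable {E F G : Type*} [NormedAddCommGroup E] [NormedAddCommGroup F] [NormedAddCommGroup G]
  {p s T : ℝ}

lemma slobGapP_le_of_norm_sub_le {f : ℝ → E} {g : ℝ → F} {h : ℝ → G} (hp : 1 ≤ p)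
    (hf : Continuous f) (hg : Continuous g) {a c : ℝ} (ha : 0 ≤ a) (hc : 0 ≤ c)
    (hfgh : ∀ x ∈ Ioo 0 T, ∀ y ∈ Ioo 0 T, ‖h x - h y‖ ≤ a * ‖f x - f y‖ + c * ‖g x - g y‖) :
    slobGapP p s T h ≤ ENNReal.ofReal (2 ^ (p - 1) * a ^ p) * slobGapP p s T f +
      ENNReal.ofReal (2 ^ (p - 1) * c ^ p) * slobGapP p s T g := by
  have hker : ∀ q ∈ Ioo 0 T ×ˢ Ioo 0 T, slobKernel p s h q.1 q.2 ≤
      ENNReal.ofReal (2 ^ (p - 1) * a ^ p) * slobKernel p s f q.1 q.2 +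
        ENNReal.ofReal (2 ^ (p - 1) * c ^ p) * slobKernel p s g q.1 q.2 := by
    rintro ⟨x, y⟩ ⟨hx, hy⟩
    have hnum : ‖h x - h y‖ ^ p ≤
        2 ^ (p - 1) * a ^ p * ‖f x - f y‖ ^ p + 2 ^ (p - 1) * c ^ p * ‖g x - g y‖ ^ p := by
      calc ‖h x - h y‖ ^ p ≤ (a * ‖f x - f y‖ + c * ‖g x - g y‖) ^ p :=
            Real.rpow_le_rpow (norm_nonneg _) (hfgh x hx y hy) (by linarith)
        _ ≤ 2 ^ (p - 1) * ((a * ‖f x - f y‖) ^ p + (c * ‖g x - g y‖) ^ p) :=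
            add_rpow_le_two_rpow_mul (by positivity) (by positivity) hp
        _ = _ := by rw [Real.mul_rpow ha (norm_nonneg _), Real.mul_rpow hc (norm_nonneg _)]; ring
    have hd : 0 ≤ |x - y| ^ (1 + s * p) := by positivity
    calc slobKernel p s h x y ≤ ENNReal.ofReal
          (2 ^ (p - 1) * a ^ p * (‖f x - f y‖ ^ p / |x - y| ^ (1 + s * p)) +
            2 ^ (p - 1) * c ^ p * (‖g x - g y‖ ^ p / |x - y| ^ (1 + s * p))) :=
          ENNReal.ofReal_le_ofReal ((div_le_div_of_nonneg_right hnum hd).trans_eq (by ring))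
      _ = _ := by
          rw [ENNReal.ofReal_add (by positivity) (by positivity),
            ENNReal.ofReal_mul (by positivity : (0:ℝ) ≤ 2 ^ (p - 1) * a ^ p),
            ENNReal.ofReal_mul (by positivity : (0:ℝ) ≤ 2 ^ (p - 1) * c ^ p)]
          rfl
  have hmf := measurable_slobKernel p s hf
  have hmg := measurable_slobKernel p s hg
  calc slobGapP p s T h ≤ ∫⁻ q in Ioo 0 T ×ˢ Ioo 0 T,
        (ENNReal.ofReal (2 ^ (p - 1) * a ^ p) * slobKernel p s f q.1 q.2 +
          ENNReal.ofReal (2 ^ (p - 1) * c ^ p) * slobKernel p s g q.1 q.2) :=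
        setLIntegral_mono ((hmf.const_mul _).add (hmg.const_mul _)) hker
    _ = _ := by
        rw [lintegral_add_left (hmf.const_mul _), lintegral_const_mul _ hmf,
          lintegral_const_mul _ hmg]
        rfl

lemma integral_norm_inner_rpow_le {H : Type*} [NormedAddCommGroup H] [InnerProductSpace ℝ H]
    (hp : 0 ≤ p) (hT : 0 ≤ T) {f g : ℝ → H} (hf : Continuous f) (hg : Continuous g) {A : ℝ}
    (hA : 0 ≤ A) (hfA : ∀ t ∈ Icc 0 T, ‖f t‖ ≤ A) :
    ∫ x in (0:ℝ)..T, ‖(⟪f x, g x⟫ : ℝ)‖ ^ p ≤ A ^ p * ∫ x in (0:ℝ)..T, ‖g x‖ ^ p := by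
  rw [← intervalIntegral.integral_const_mul]
  refine intervalIntegral.integral_mono_on hT ?_ ?_ fun x hx => ?_
  · exact ((hf.inner hg).norm.rpow_const fun _ => Or.inr hp).intervalIntegrable 0 T
  · exact (continuous_const.mul (hg.norm.rpow_const fun _ => Or.inr hp)).intervalIntegrable 0 T
  · rw [← Real.mul_rpow hA (norm_nonneg _)]
    exact Real.rpow_le_rpow (norm_nonneg _) ((norm_inner_le_norm _ _).trans
      (mul_le_mul_of_nonneg_right (hfA x hx) (norm_nonneg _))) hp

lemma toReal_slobGapP_inner_le {H : Type*} [NormedAddCommGroup H] [InnerProductSpace ℝ H]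
    (hp : 1 ≤ p) {f g : ℝ → H} (hf : Continuous f) (hg : Continuous g)
    (hfgap : slobGapP p s T f ≠ ⊤) (hggap : slobGapP p s T g ≠ ⊤) {A M : ℝ} (hA : 0 ≤ A)
    (hM : 0 ≤ M) (hfA : ∀ t ∈ Ioo 0 T, ‖f t‖ ≤ A) (hgM : ∀ t ∈ Ioo 0 T, ‖g t‖ ≤ M) :
    (slobGapP p s T fun t => (⟪f t, g t⟫ : ℝ)).toReal ≤
      2 ^ (p - 1) * M ^ p * (slobGapP p s T f).toReal +
        2 ^ (p - 1) * A ^ p * (slobGapP p s T g).toReal := by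
  have hle := slobGapP_le_of_norm_sub_le (s := s) (h := fun t => (⟪f t, g t⟫ : ℝ))
    hp hf hg hM hA fun x hx y hy => (norm_inner_sub_inner_le _ _ _ _).trans <| add_le_add
      (mul_le_mul_of_nonneg_right (hgM y hy) (norm_nonneg _))
      (mul_le_mul_of_nonneg_right (hfA x hx) (norm_nonneg _))
  refine (ENNReal.toReal_mono (by finiteness) hle).trans_eq ?_
  rw [ENNReal.toReal_add (by finiteness) (by finiteness), ENNReal.toReal_mul, ENNReal.toReal_mul,
    ENNReal.toReal_ofReal (by positivity), ENNReal.toReal_ofReal (by positivity)]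

theorem slobNorm_inner_le {H : Type*} [NormedAddCommGroup H] [InnerProductSpace ℝ H]
    (hp : 1 < p) (hT : 0 < T) {f g : ℝ → H} (hf : Continuous f) (hg : Continuous g)
    (hfgap : slobGapP p s T f ≠ ⊤) (hggap : slobGapP p s T g ≠ ⊤) {C₀ : ℝ} (hC₀ : 0 ≤ C₀)
    (hgC₀ : ∀ t ∈ Icc 0 T, ‖g t‖ ≤ C₀ * slobSemi p s T g) :
    slobNorm p s T (fun t => (⟪f t, g t⟫ : ℝ)) ≤ (1 + 2 ^ (p - 1) * (1 + C₀ ^ p)) ^ (1 / p) *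
      (slobSemi p s T f + ⨆ t ∈ Icc (0:ℝ) T, ‖f t‖) * slobNorm p s T g := by
  have hp0 : 0 < p := by linarith
  set A := ⨆ t ∈ Icc (0:ℝ) T, ‖f t‖
  set X := slobSemi p s T f + A
  set Y := slobNorm p s T g
  have hfA : ∀ t ∈ Icc 0 T, ‖f t‖ ≤ A := fun t ht =>
    norm_le_biSup_of_continuousOn isCompact_Icc hf.continuousOn ht
  have hA : 0 ≤ A := (norm_nonneg _).trans (hfA 0 (left_mem_Icc.2 hT.le))
  have hSf : 0 ≤ slobSemi p s T f := Real.rpow_nonneg ENNReal.toReal_nonneg _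
  have hSg : 0 ≤ slobSemi p s T g := Real.rpow_nonneg ENNReal.toReal_nonneg _
  have hLp := integral_norm_inner_rpow_le hp0.le hT.le hf hg hA hfA
  have hgap := toReal_slobGapP_inner_le (s := s) hp.le hf hg hfgap hggap hA (by positivity)
    (fun t ht => hfA t (Ioo_subset_Icc_self ht)) (fun t ht => hgC₀ t (Ioo_subset_Icc_self ht))
  rw [Real.mul_rpow hC₀ hSg, slobSemi_rpow hp0] at hgap
  have hX : 0 ≤ X := add_nonneg hSf hA
  have hY : 0 ≤ Y := Real.rpow_nonneg (integral_norm_rpow_add_slobGapP_nonneg hT.le g) _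
  have hYp := slobNorm_rpow (s := s) hp0 hT.le g
  have hIg0 : 0 ≤ ∫ x in (0:ℝ)..T, ‖g x‖ ^ p :=
    intervalIntegral.integral_nonneg hT.le fun x _ => by positivity
  have hGg0 := ENNReal.toReal_nonneg (a := slobGapP p s T g)
  have hGf0 := ENNReal.toReal_nonneg (a := slobGapP p s T f)
  have hIg : (∫ x in (0:ℝ)..T, ‖g x‖ ^ p) ≤ Y ^ p := by linarith
  have hGg : (slobGapP p s T g).toReal ≤ Y ^ p := by linarith
  have hAX : A ^ p ≤ X ^ p := Real.rpow_le_rpow hA (by linarith) hp0.le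
  have hGf : (slobGapP p s T f).toReal ≤ X ^ p := by
    rw [← slobSemi_rpow hp0]
    exact Real.rpow_le_rpow hSf (by linarith) hp0.le
  have hXp : 0 ≤ X ^ p := by positivity
  have hprod₁ := mul_le_mul hAX hIg hIg0 hXp
  have hprod₂ := mul_le_mul_of_nonneg_left (mul_le_mul hGg hGf hGf0 (by positivity))
    (by positivity : (0:ℝ) ≤ 2 ^ (p - 1) * C₀ ^ p)
  have hprod₃ := mul_le_mul_of_nonneg_left (mul_le_mul hAX hGg hGg0 hXp)
    (by positivity : (0:ℝ) ≤ 2 ^ (p - 1))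
  refine slobNorm_le_of_rpow_le hp0 hT.le (by positivity) ?_
  rw [Real.mul_rpow (by positivity) hY, Real.mul_rpow (by positivity) hX, ← Real.rpow_mul
    (by positivity), one_div_mul_cancel hp0.ne', Real.rpow_one]
  linarith

end Product

theorem statement19_general
    (p s : ℝ) (hp : 1 < p) (hs₁ : 1 / p < s)
    (N : ℕ) (T' : ℝ) (hT' : 0 < T') :
    ∃ C : ℝ, 0 < C ∧
      ∀ T : ℝ, 0 < T → T ≤ T' →
      ∀ f g : ℝ → EuclideanSpace ℝ (Fin N),
        ContinuousOn f (Icc 0 T) → ContinuousOn g (Icc 0 T) →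
        slobGapP p s T f ≠ ⊤ → slobGapP p s T g ≠ ⊤ →
        g 0 = 0 →
        slobNorm p s T (fun t => (⟪f t, g t⟫ : ℝ))
          ≤ C * (slobSemi p s T f + ⨆ t ∈ Icc (0:ℝ) T, ‖f t‖) * slobNorm p s T g := by
  obtain ⟨C₀, hC₀, hmorrey⟩ :=
    exists_norm_le_mul_slobSemi (E := EuclideanSpace ℝ (Fin N)) hp hs₁ hT'
  refine ⟨(1 + 2 ^ (p - 1) * (1 + C₀ ^ p)) ^ (1 / p), by positivity,
    fun T hT hTT' f g hf hg hfgap hggap hg0 => ?_⟩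
  obtain ⟨f', hf'c, hf'⟩ := hf.exists_continuous_eqOn_Icc hT.le
  obtain ⟨g', hg'c, hg'⟩ := hg.exists_continuous_eqOn_Icc hT.le
  have hfg' : EqOn (fun t => (⟪f' t, g' t⟫ : ℝ)) (fun t => ⟪f t, g t⟫) (Icc 0 T) :=
    fun t ht => by simp only [hf' ht, hg' ht]
  have hf'gap := slobGapP_congr (p := p) (s := s) (hf'.mono Ioo_subset_Icc_self)
  have hg'gap := slobGapP_congr (p := p) (s := s) (hg'.mono Ioo_subset_Icc_self)
  have key := slobNorm_inner_le hp hT hf'c hg'c (hf'gap ▸ hfgap) (hg'gap ▸ hggap) hC₀.le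
    (hmorrey T hT hTT' g' hg'c (hg'gap ▸ hggap) (by rw [hg' (left_mem_Icc.2 hT.le), hg0]))
  rwa [slobNorm_congr hT.le hfg', slobSemi, hf'gap, ← slobSemi, slobNorm_congr hT.le hg',
    biSup_congr fun t ht => by rw [hf' ht]] at key

/-- product estimate in Sobolev–Slobodetskii spaces (Lemma A.3). -/
theorem statement19
    (p s : ℝ) (hp : 1 < p) (hs₁ : 1 / p < s) (hs₂ : s < 1)
    (N : ℕ) (T' : ℝ) (hT' : 0 < T') :
    ∃ C : ℝ, 0 < C ∧
      ∀ T : ℝ, 0 < T → T ≤ T' →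
      ∀ f g : ℝ → EuclideanSpace ℝ (Fin N),
        ContinuousOn f (Icc 0 T) → ContinuousOn g (Icc 0 T) →
        slobGapP p s T f ≠ ⊤ → slobGapP p s T g ≠ ⊤ →
        g 0 = 0 →
        slobNorm p s T (fun t => (⟪f t, g t⟫ : ℝ))
          ≤ C * (slobSemi p s T f + ⨆ t ∈ Icc (0:ℝ) T, ‖f t‖) * slobNorm p s T g :=
  statement19_general p s hp hs₁ N T' hT'

end
end
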